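/- Let q be a prime power and let k, n, m be integers with 1 < k < n and m < n ≤ km. Set t = ⌊(km − n)/m⌋, a = n − (k − t − 2)m, and h = max{⌊a/2^{t+1}⌋, 1}. Then every nondegenerate [n,k]_{q^m/q} rank-metric code C satisfies |WS(C)| ≤ m − h + 1. -/

import Mathlib

/-!
A nonzero codeword has rank weight in `[1, m]`; so if the code had more than `m - h + 1`
weights, fewer than `h - 1` values of `[1, m]` would be missing from its spectrum.
Choose weights greedily, each the smallest one exceeding the sum `S` of those chosen before.
The values skipped on the way are missing and pairwise disjoint, which keeps `S` so small that
`t + 2` steps are possible and end with `S < 2^(t+1) h ≤ a`. Codewords with such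
super-increasing weights are linearly independent (a combination of earlier ones has weight at
most the sum of theirs), so extending them to a basis of `C`, nondegeneracy gives
`n ≤ S + (k - t - 2) m`, that is `a ≤ S`.
-/

/-- The rank weight of a vector `v ∈ L^n`, where `L/K` is a field extension:
the `K`-dimension of the `K`-span of the entries of `v`. -/
noncomputable def rankWeight (K : Type*) [Field K] {L : Type*} [Field L] [Algebra K L]
    {n : ℕ} (v : Fin n → L) : ℕ :=
  Module.finrank K (Submodule.span K (Set.range v))

/-- The weight spectrum of a rank-metric code `C ⊆ L^n`: the set of rank weights of its
nonzero codewords. -/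
noncomputable def weightSpectrum (K : Type*) [Field K] {L : Type*} [Field L] [Algebra K L]
    {n : ℕ} (C : Submodule L (Fin n → L)) : Set ℕ :=
  {w | ∃ c ∈ C, c ≠ 0 ∧ rankWeight K c = w}

/-- A rank-metric code `C ⊆ L^n` is nondegenerate if for every nonzero `x ∈ K^n` there is a
codeword `c ∈ C` with `∑ j, x j • c j ≠ 0`. -/
def IsNondegenerate (K : Type*) [Field K] {L : Type*} [Field L] [Algebra K L]
    {n : ℕ} (C : Submodule L (Fin n → L)) : Prop :=
  ∀ x : Fin n → K, x ≠ 0 → ∃ c ∈ C, (∑ j, x j • c j) ≠ 0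

open Module Submodule Finset

section RankWeight

variable {K L : Type*} [Field K] [Field L] [Algebra K L] {n : ℕ}

instance (v : Fin n → L) : FiniteDimensional K (span K (Set.range v)) :=
  FiniteDimensional.span_of_finite K (Set.finite_range v)

lemma rankWeight_zero : rankWeight K (0 : Fin n → L) = 0 := by
  simp [rankWeight]

lemma rankWeight_pos {v : Fin n → L} (hv : v ≠ 0) : 0 < rankWeight K v := by
  obtain ⟨j, hj⟩ := Function.ne_iff.mp hv
  have : Nontrivial (span K (Set.range v)) :=
    nontrivial_iff_ne_bot.mpr fun h => hj <| eq_bot_iff.mp h (subset_span ⟨j, rfl⟩)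
  exact finrank_pos

lemma rankWeight_le_finrank [FiniteDimensional K L] (v : Fin n → L) :
    rankWeight K v ≤ finrank K L :=
  Submodule.finrank_le _

lemma rankWeight_add_le (v w : Fin n → L) :
    rankWeight K (v + w) ≤ rankWeight K v + rankWeight K w := by
  have hle : span K (Set.range (v + w)) ≤ span K (Set.range v) ⊔ span K (Set.range w) :=
    span_le.mpr <| Set.range_subset_iff.mpr fun j =>
      add_mem_sup (subset_span ⟨j, rfl⟩) (subset_span ⟨j, rfl⟩)
  exact (finrank_mono hle).trans (finrank_add_le_finrank_add_finrank _ _)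

lemma rankWeight_smul_le (μ : L) (v : Fin n → L) : rankWeight K (μ • v) ≤ rankWeight K v := by
  have : Set.range (μ • v) = LinearMap.mulLeft K μ '' Set.range v := by
    rw [← Set.range_comp]; rfl
  rw [rankWeight, this, ← map_span]
  exact finrank_map_le _ _

lemma rankWeight_le_sum_of_mem_span {ι : Type*} {c : ι → Fin n → L} {s : Finset ι}
    {x : Fin n → L} (hx : x ∈ span L (c '' s)) :
    rankWeight K x ≤ ∑ i ∈ s, rankWeight K (c i) := by
  obtain ⟨μ, rfl⟩ := (mem_span_image_finset_iff_exists_fun' (R := L)).mp hx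
  exact (le_sum_of_subadditive _ rankWeight_zero.le rankWeight_add_le _ _).trans
    (sum_le_sum fun i _ => rankWeight_smul_le _ _)

lemma linearIndepOn_range_of_sum_lt_rankWeight (c : ℕ → Fin n → L) (r : ℕ)
    (hc : ∀ i < r, ∑ j ∈ range i, rankWeight K (c j) < rankWeight K (c i)) :
    LinearIndepOn L c (range r : Set ℕ) := by
  induction r with
  | zero => simp
  | succ r ih =>
    rw [range_add_one, coe_insert, linearIndepOn_insert (by simp)]
    exact ⟨ih fun i hi => hc i (by omega),
      fun hmem => (hc r r.lt_add_one).not_ge (rankWeight_le_sum_of_mem_span hmem)⟩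

end RankWeight

lemma Module.Basis.sumExtend_apply_inl {K V ι : Type*} [DivisionRing K] [AddCommGroup V]
    [Module K V] {v : ι → V} (hv : LinearIndependent K v) (i : ι) :
    Basis.sumExtend hv (Sum.inl i) = v i := by
  rw [Basis.sumExtend, Basis.reindex_apply, Basis.coe_extend]
  rfl

section Nondegenerate

variable {K L : Type*} [Field K] [Field L] [Algebra K L] {n : ℕ} {C : Submodule L (Fin n → L)}

lemma le_sum_rankWeight_of_le_span (hnd : IsNondegenerate K C)
    {ι : Type*} [Fintype ι] (b : ι → Fin n → L) (hC : C ≤ span L (Set.range b)) :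
    n ≤ ∑ i, rankWeight K (b i) := by
  let f : ι → (Fin n → K) →ₗ[K] L := fun i => Fintype.linearCombination K (b i)
  have hinj : Function.Injective (LinearMap.pi fun i => (f i).rangeRestrict) := by
    rw [← LinearMap.ker_eq_bot, eq_bot_iff]
    intro x hx
    have hb : ∀ i, ∑ j, x j • b i j = 0 := fun i => by
      simpa [f, Fintype.linearCombination_apply] using congrArg Subtype.val (congrFun hx i)
    have hspan : ∀ c ∈ span L (Set.range b), ∑ j, x j • c j = 0 := by
      intro c hc
      induction hc using span_induction with
      | mem _ hc => obtain ⟨i, rfl⟩ := hc; exact hb i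
      | zero => simp
      | add c d _ _ hc hd => simp [smul_add, sum_add_distrib, hc, hd]
      | smul μ c _ hc =>
        simp only [Pi.smul_apply, smul_eq_mul, ← mul_smul_comm, ← mul_sum, hc, mul_zero]
    by_contra hx0
    obtain ⟨c, hcC, hc⟩ := hnd x hx0
    exact hc (hspan c (hC hcC))
  calc n = finrank K (Fin n → K) := by simp
    _ ≤ finrank K (∀ i, LinearMap.range (f i)) := LinearMap.finrank_le_finrank_of_injective hinj
    _ = ∑ i, rankWeight K (b i) := by
      rw [finrank_pi_fintype]
      exact sum_congr rfl fun i _ => by rw [Fintype.range_linearCombination]; rfl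

lemma le_sum_rankWeight_add_mul_finrank [FiniteDimensional K L] (hnd : IsNondegenerate K C)
    {k : ℕ} (hdim : finrank L C = k) {ι : Type*} {c : ι → Fin n → L} {s : Finset ι}
    (hsC : ∀ i ∈ s, c i ∈ C) (hli : LinearIndepOn L c s) :
    n ≤ ∑ i ∈ s, rankWeight K (c i) + (k - #s) * finrank K L := by
  let c' : s → C := fun i => ⟨c i, hsC i i.2⟩
  have hli' : LinearIndependent L c' := LinearIndependent.of_comp C.subtype hli
  let B := Basis.sumExtend hli'
  have : Finite (Basis.sumExtendIndex hli') := by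
    have := Module.Finite.finite_basis B
    exact Finite.of_injective (Sum.inr : _ → s ⊕ _) Sum.inr_injective
  let := Fintype.ofFinite (Basis.sumExtendIndex hli')
  have hcard : #s + Fintype.card (Basis.sumExtendIndex hli') = k := by
    rw [← hdim, finrank_eq_card_basis B, Fintype.card_sum, Fintype.card_coe]
  have hspan : C ≤ span L (Set.range fun x => (B x : Fin n → L)) := by
    rw [show (fun x => (B x : Fin n → L)) = C.subtype ∘ B from rfl, Set.range_comp, ← map_span,
      B.span_eq, map_subtype_top]
  calc n ≤ ∑ x, rankWeight K (B x : Fin n → L) := le_sum_rankWeight_of_le_span hnd _ hspan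
    _ = ∑ i ∈ s, rankWeight K (c i) + ∑ j, rankWeight K (B (.inr j) : Fin n → L) := by
      rw [Fintype.sum_sum_type, ← sum_coe_sort s]
      simp only [B, Basis.sumExtend_apply_inl, c']
    _ ≤ ∑ i ∈ s, rankWeight K (c i) + (k - #s) * finrank K L := by
      gcongr
      calc _ ≤ ∑ _j, finrank K L := sum_le_sum fun j _ => rankWeight_le_finrank _
        _ = (k - #s) * finrank K L := by simp [← hcard]

lemma le_sum_add_mul_finrank_of_superIncreasing [FiniteDimensional K L]
    (hnd : IsNondegenerate K C) {k : ℕ} (hdim : finrank L C = k) {v : ℕ → ℕ} {r : ℕ}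
    (hv : ∀ i < r, v i ∈ weightSpectrum K C ∧ ∑ j ∈ range i, v j < v i) :
    n ≤ ∑ i ∈ range r, v i + (k - r) * finrank K L := by
  have hcode : ∀ w ∈ weightSpectrum K C, ∃ c ∈ C, rankWeight K c = w :=
    fun w ⟨c, hcC, _, hcw⟩ => ⟨c, hcC, hcw⟩
  choose! c hcC hcw using hcode
  have hsum : ∀ i ≤ r, ∑ j ∈ range i, rankWeight K (c (v j)) = ∑ j ∈ range i, v j :=
    fun i hi => sum_congr rfl fun j hj => hcw _ (hv j (by simp at hj; omega)).1
  have hli : LinearIndepOn L (c ∘ v) (range r : Set ℕ) :=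
    linearIndepOn_range_of_sum_lt_rankWeight (K := K) _ _ fun i hi => by
      simpa only [Function.comp_apply, hcw _ (hv i hi).1, hsum i hi.le] using (hv i hi).2
  simpa [hsum r le_rfl] using le_sum_rankWeight_add_mul_finrank hnd hdim
    (fun i hi => hcC _ (hv i (mem_range.mp hi)).1) hli

end Nondegenerate

section GreedyChain

variable {T : Finset ℕ} {m : ℕ}

/-- The invariant of the greedy chain after `j` steps with weight sum `S`. A step replaces
`S + 1` by at most `2 (S + 1) + g`, where the `g` skipped values are missing values above `S`;
weighting those by `2 ^ j` pays for the `g`. -/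
def ChainBound (T : Finset ℕ) (m j S : ℕ) : Prop :=
  2 * (S + 1) + 2 ^ j * #(Ioc S m \ T) ≤ 2 ^ j * (#(Icc 1 m \ T) + 2)

lemma exists_mem_gt_of_chain_bound {j S : ℕ}
    (hinv : ChainBound T m j S)
    (hj : 2 ^ j * (#(Icc 1 m \ T) + 2) ≤ 2 * m) (hμ : #(Icc 1 m \ T) < m) :
    ∃ x ∈ T, S < x := by
  unfold ChainBound at hinv
  by_contra! hno
  have hS : S < m := by
    have : 0 ≤ 2 ^ j * #(Ioc S m \ T) := Nat.zero_le _
    omega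
  have hA : #(Ioc S m \ T) = m - S := by
    rw [sdiff_eq_self_of_disjoint (disjoint_left.mpr fun x hx hxT =>
      (mem_Ioc.mp hx).1.not_ge (hno x hxT)), Nat.card_Ioc]
  rw [hA] at hinv
  rcases j with _ | j
  · simp only [pow_zero, one_mul] at hinv
    omega
  · have : 2 * (m - S) ≤ 2 ^ (j + 1) * (m - S) :=
      Nat.mul_le_mul_right _ (Nat.le_self_pow (by omega) 2)
    omega

lemma exists_chain_step (hT : T ⊆ Icc 1 m) {j S : ℕ}
    (hinv : ChainBound T m j S)
    (hx : ∃ x ∈ T, S < x) :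
    ∃ w ∈ T, S < w ∧ ChainBound T m (j + 1) (S + w) := by
  have hne : (T.filter (S < ·)).Nonempty := by simpa [Finset.Nonempty] using hx
  obtain ⟨hwT, hSw⟩ := mem_filter.mp ((T.filter (S < ·)).min'_mem hne)
  set w := (T.filter (S < ·)).min' hne
  have hmin : ∀ x ∈ T, S < x → w ≤ x := fun x hxT hSx => min'_le _ _ (mem_filter.mpr ⟨hxT, hSx⟩)
  have hwm : w ≤ m := (mem_Icc.mp (hT hwT)).2
  have hgap : #(Ioc (S + w) m \ T) + (w - S - 1) ≤ #(Ioc S m \ T) := by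
    have hdisj : Disjoint (Ioc (S + w) m \ T) (Ioo S w) := disjoint_left.mpr fun x hx hx' => by
      simp only [mem_sdiff, mem_Ioc, mem_Ioo] at hx hx'
      omega
    have hsub : (Ioc (S + w) m \ T) ∪ Ioo S w ⊆ Ioc S m \ T := fun x hx => by
      simp only [mem_union, mem_sdiff, mem_Ioc, mem_Ioo] at hx ⊢
      rcases hx with hx | hx
      · exact ⟨⟨by omega, hx.1.2⟩, hx.2⟩
      · exact ⟨by omega, fun hxT => (hmin x hxT hx.1).not_gt hx.2⟩
    simpa [card_union_of_disjoint hdisj] using card_le_card hsub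
  refine ⟨w, hwT, hSw, ?_⟩
  unfold ChainBound at hinv ⊢
  obtain ⟨g, hg⟩ : ∃ g, w = S + 1 + g := ⟨w - S - 1, by omega⟩
  rw [hg, show S + 1 + g - S - 1 = g by omega] at hgap
  have h1 := Nat.mul_le_mul_left (2 ^ j) hgap
  have h2 : g ≤ 2 ^ j * g := Nat.le_mul_of_pos_left g (Nat.two_pow_pos j)
  rw [hg, pow_succ]
  nlinarith

lemma exists_superIncreasing_chain (hT : T ⊆ Icc 1 m) {r : ℕ}
    (hr : 2 ^ r * (#(Icc 1 m \ T) + 2) ≤ 2 * m) (hμ : #(Icc 1 m \ T) < m) :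
    ∃ v : ℕ → ℕ, (∀ i < r + 1, v i ∈ T ∧ ∑ l ∈ range i, v l < v i) ∧
      ∑ i ∈ range (r + 1), v i + 1 ≤ 2 ^ r * (#(Icc 1 m \ T) + 2) := by
  have key : ∀ j ≤ r + 1, ∃ v : ℕ → ℕ, (∀ i < j, v i ∈ T ∧ ∑ l ∈ range i, v l < v i) ∧
      ChainBound T m j (∑ i ∈ range j, v i) := by
    intro j hj
    induction j with
    | zero => exact ⟨0, by simp, by simp [ChainBound, ← Icc_succ_left_eq_Ioc, add_comm]⟩
    | succ j ih =>
      obtain ⟨v, hv, hinv⟩ := ih (by omega)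
      have hjr : 2 ^ j * (#(Icc 1 m \ T) + 2) ≤ 2 * m :=
        (Nat.mul_le_mul_right _ (Nat.pow_le_pow_right two_pos (by omega))).trans hr
      obtain ⟨w, hwT, hSw, hinv'⟩ :=
        exists_chain_step hT hinv (exists_mem_gt_of_chain_bound hinv hjr hμ)
      have hsum : ∀ i ≤ j, ∑ l ∈ range i, Function.update v j w l = ∑ l ∈ range i, v l :=
        fun i hi => sum_congr rfl fun l hl => Function.update_of_ne (by simp at hl; omega) _ _
      refine ⟨Function.update v j w, fun i hi => ?_, ?_⟩
      · rcases Nat.lt_succ_iff_lt_or_eq.mp hi with hi | rfl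
        · rw [Function.update_of_ne hi.ne, hsum i hi.le]
          exact hv i hi
        · rw [Function.update_self, hsum i le_rfl]
          exact ⟨hwT, hSw⟩
      · rwa [sum_range_succ, hsum j le_rfl, Function.update_self]
  obtain ⟨v, hv, hinv⟩ := key (r + 1) le_rfl
  refine ⟨v, hv, ?_⟩
  rw [ChainBound, pow_succ] at hinv
  nlinarith [Nat.zero_le (2 ^ r * #(Ioc (∑ i ∈ range (r + 1), v i) m \ T))]

end GreedyChain

lemma weightSpectrum_subset_Icc {K L : Type*} [Field K] [Field L] [Algebra K L]
    [FiniteDimensional K L] {n : ℕ} (C : Submodule L (Fin n → L)) :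
    weightSpectrum K C ⊆ Set.Icc 1 (finrank K L) := by
  rintro _ ⟨c, -, hc0, rfl⟩
  exact ⟨rankWeight_pos hc0, rankWeight_le_finrank c⟩

theorem weightSpectrum_ncard_le_of_gt_general (m n k t a h : ℕ)
    (hmn : m < n) (hkm : n ≤ k * m)
    (ht : t = (k * m - n) / m) (ha : a = n - (k - t - 2) * m)
    (hh : h = max (a / 2 ^ (t + 1)) 1)
    (K L : Type) [Field K] [Field L] [Algebra K L]
    (hdeg : Module.finrank K L = m)
    (C : Submodule L (Fin n → L)) (hdim : Module.finrank L C = k)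
    (hnd : IsNondegenerate K C) :
    (weightSpectrum K C).ncard ≤ m - h + 1 := by
  have hm : 0 < m := Nat.pos_of_ne_zero fun hm0 => by simp [hm0] at hkm; omega
  have : FiniteDimensional K L := Module.finite_of_finrank_pos (hdeg ▸ hm)
  have hWS := hdeg ▸ weightSpectrum_subset_Icc (K := K) C
  obtain ⟨T, hT⟩ := ((Set.finite_Icc 1 m).subset hWS).exists_finset_coe
  have hTm : T ⊆ Icc 1 m := by rw [← coe_subset, hT, coe_Icc]; exact hWS
  have hmiss : #(Icc 1 m \ T) + #T = m := by simpa using card_sdiff_add_card_eq_card hTm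
  rw [← hT, Set.ncard_coe_finset]
  by_contra! hlt
  have ha2m : a ≤ 2 * m := by
    have htm : t * m ≤ k * m - n := ht ▸ Nat.div_mul_le_self _ _
    have : (k - t - 2) * m = k * m - t * m - 2 * m := by
      rw [Nat.sub_sub, Nat.sub_mul, Nat.add_mul, ← Nat.sub_sub]
    omega
  have hha : 2 ^ (t + 1) * h ≤ a := by
    rw [hh, max_eq_left (by omega), mul_comm]
    exact Nat.div_mul_le_self _ _
  have hpow : 2 ≤ 2 ^ (t + 1) := Nat.le_self_pow (by omega) 2
  have hμh : #(Icc 1 m \ T) + 2 ≤ h := by omega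
  obtain ⟨v, hv, hvsum⟩ := exists_superIncreasing_chain hTm (r := t + 1)
    ((Nat.mul_le_mul_left _ hμh).trans (hha.trans ha2m)) (by nlinarith)
  rw [show t + 1 + 1 = t + 2 from rfl] at hv hvsum
  have hn := le_sum_add_mul_finrank_of_superIncreasing hnd hdim fun i hi =>
    ⟨hT ▸ (hv i hi).1, (hv i hi).2⟩
  rw [hdeg] at hn
  rw [Nat.sub_sub] at ha
  have := Nat.mul_le_mul_left (2 ^ (t + 1)) hμh
  omega

/-- Theorem (upper bound, case n > m): every nondegenerate [n,k]_{q^m/q} code has at most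
m − h + 1 distinct nonzero rank weights, where t = ⌊(km−n)/m⌋, a = n − (k−t−2)m and
h = max{⌊a/2^{t+1}⌋, 1}. -/
theorem weightSpectrum_ncard_le_of_gt (q m n k t a h : ℕ) (hq : IsPrimePow q)
    (hk : 1 < k) (hkn : k < n) (hmn : m < n) (hkm : n ≤ k * m)
    (ht : t = (k * m - n) / m) (ha : a = n - (k - t - 2) * m)
    (hh : h = max (a / 2 ^ (t + 1)) 1)
    (K L : Type) [Field K] [Fintype K] [Field L] [Algebra K L]
    (hcard : Fintype.card K = q) (hdeg : Module.finrank K L = m)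
    (C : Submodule L (Fin n → L)) (hdim : Module.finrank L C = k)
    (hnd : IsNondegenerate K C) :
    (weightSpectrum K C).ncard ≤ m - h + 1 :=
  weightSpectrum_ncard_le_of_gt_general m n k t a h hmn hkm ht ha hh K L hdeg C hdim hnd
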